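/- Assume additionally that G is the left-continuous quantile function of μ: G(u) = inf{x ∈ ℝ : μ((−∞,x]) ≥ u}. Then for each v ∈ (0,1) and every k ∈ ℝ: lim_{u↑v} ℰ_u(k) = ℰ_v(k) = lim_{u↓v} ℰ_u(k) and lim_{u↑v} ℰ_u^c(k) = ℰ_v^c(k) = lim_{u↓v} ℰ_u^c(k). -/

import Mathlib

/-!
Write `ℰ_u = P_ν - Q_u`, where `Q_u k = P_μ (min k (G u)) + u (k - G u)⁺`. Because `G` is a
quantile function, `P_μ` has slope at least `u` to the right of `G u` and at most `w` to the left
of `G w`; hence for `u ≤ w` we get `ℰ_w ≤ ℰ_u ≤ ℰ_w + (w - u) (k - G u)⁺`. Since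
`P_ν k ≥ k - ∫ x dν`, `ℰ_w` grows at least with slope `1 - w`, so on a compact interval
`[u₀, u₁] ⊂ (0, 1)` the error term is at most `(w - u) / (1 - u₁) * (ℰ_w + c)`. Inequalities
`f ≤ α g + β` with `α > 0` pass to largest convex minorants, so `ℰ^c` obeys the same two bounds.
Both families are therefore locally Lipschitz in `u`, in particular continuous.
-/

open MeasureTheory Set Filter Topology

noncomputable def putPrice (μ : Measure ℝ) (k : ℝ) : ℝ := ∫ x, max (k - x) 0 ∂μ

/-- The put price of the part of `μ` of mass `u` sitting lowest, when `G` is a quantile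
function of `μ`. -/
noncomputable def quantilePut (μ : Measure ℝ) (G : ℝ → ℝ) (u k : ℝ) : ℝ :=
  putPrice μ (min k (G u)) + u * max (k - G u) 0

noncomputable def quantileGap (μ ν : Measure ℝ) (G : ℝ → ℝ) (u k : ℝ) : ℝ :=
  putPrice ν k - quantilePut μ G u k

def IsLargestConvexMinorant {E : Type*} [AddCommGroup E] [Module ℝ E] (fc f : E → ℝ) : Prop :=
  ConvexOn ℝ univ fc ∧ fc ≤ f ∧ ∀ h : E → ℝ, ConvexOn ℝ univ h → h ≤ f → h ≤ fc

def SlowlyAntitoneOn (φ : ℝ → ℝ) (s : Set ℝ) (a c : ℝ) : Prop :=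
  ∀ u ∈ s, ∀ w ∈ s, u ≤ w → φ w ≤ φ u ∧ φ u + c ≤ (1 + (w - u) / a) * (φ w + c)

theorem SlowlyAntitoneOn.congr {φ ψ : ℝ → ℝ} {s : Set ℝ} {a c : ℝ}
    (h : SlowlyAntitoneOn φ s a c) (hφψ : EqOn φ ψ s) : SlowlyAntitoneOn ψ s a c := by
  intro u hu w hw huw
  rw [← hφψ hu, ← hφψ hw]
  exact h u hu w hw huw

namespace IsLargestConvexMinorant

variable {E : Type*} [AddCommGroup E] [Module ℝ E] {f g fc gc : E → ℝ}

theorem mono (hf : IsLargestConvexMinorant fc f) (hg : IsLargestConvexMinorant gc g)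
    (hfg : f ≤ g) : fc ≤ gc :=
  hg.2.2 fc hf.1 (hf.2.1.trans hfg)

theorem le_mul_add (hf : IsLargestConvexMinorant fc f) (hg : IsLargestConvexMinorant gc g)
    {α β : ℝ} (hα : 0 < α) (hfg : ∀ x, f x ≤ α * g x + β) (x : E) : fc x ≤ α * gc x + β := by
  have hconv : ConvexOn ℝ univ fun y => α⁻¹ * (fc y - β) := by
    simpa [sub_eq_add_neg] using (hf.1.add_const (-β)).smul (inv_nonneg.2 hα.le)
  have hle : (fun y => α⁻¹ * (fc y - β)) ≤ g := fun y => by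
    rw [inv_mul_le_iff₀ hα]
    linarith [hf.2.1 y, hfg y]
  have := hg.2.2 _ hconv hle x
  rw [inv_mul_le_iff₀ hα] at this
  linarith

theorem slowlyAntitoneOn {F Fc : ℝ → E → ℝ} {s : Set ℝ} {a c : ℝ}
    (hF : ∀ u ∈ s, IsLargestConvexMinorant (Fc u) (F u)) (ha : 0 ≤ a)
    (h : ∀ x, SlowlyAntitoneOn (fun u => F u x) s a c) (x : E) :
    SlowlyAntitoneOn (fun u => Fc u x) s a c := by
  intro u hu w hw huw
  refine ⟨(hF w hw).mono (hF u hu) (fun y => (h y u hu w hw huw).1) x, ?_⟩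
  have := (hF u hu).le_mul_add (hF w hw) (by positivity : 0 < 1 + (w - u) / a)
    (β := (w - u) / a * c) (fun y => by linarith [(h y u hu w hw huw).2]) x
  linarith

end IsLargestConvexMinorant

theorem SlowlyAntitoneOn.continuousAt {φ : ℝ → ℝ} {p q v a c : ℝ}
    (h : SlowlyAntitoneOn φ (Icc p q) a c) (ha : 0 ≤ a) (hv : v ∈ Ioo p q) :
    ContinuousAt φ v := by
  have hp : p ∈ Icc p q := left_mem_Icc.2 (hv.1.trans hv.2).le
  have hlip : ∀ u ∈ Icc p q, ∀ w ∈ Icc p q, u ≤ w →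
      dist (φ u) (φ w) ≤ (φ p + c) / a * dist u w := by
    intro u hu w hw huw
    obtain ⟨hanti, hle⟩ := h u hu w hw huw
    rw [Real.dist_eq, Real.dist_eq, abs_of_nonneg (sub_nonneg.2 hanti), abs_sub_comm,
      abs_of_nonneg (sub_nonneg.2 huw)]
    calc φ u - φ w ≤ (w - u) / a * (φ w + c) := by linarith
      _ ≤ (w - u) / a * (φ p + c) := mul_le_mul_of_nonneg_left
        (by linarith [(h p hp w hw hw.1).1]) (div_nonneg (sub_nonneg.2 huw) ha)
      _ = (φ p + c) / a * (w - u) := by ring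
  obtain ⟨r, hr, hball⟩ := Metric.mem_nhds_iff.1 (Icc_mem_nhds hv.1 hv.2)
  refine continuousAt_of_locally_lipschitz hr ((φ p + c) / a) fun u hu => ?_
  have hu : u ∈ Icc p q := hball hu
  have hv : v ∈ Icc p q := Ioo_subset_Icc_self hv
  rcases le_total u v with huv | hvu
  · exact hlip u hu v hv huv
  · rw [dist_comm, dist_comm u]
    exact hlip v hv u hu hvu

theorem max_sub_zero_eq_sub_min (k g : ℝ) : max (k - g) 0 = k - min k g := by
  rw [← max_sub_sub_left, sub_self, max_comm]

theorem convexOn_put (k : ℝ) : ConvexOn ℝ univ fun x : ℝ => max (k - x) 0 := by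
  have := ((concaveOn_id (convex_univ (𝕜 := ℝ))).neg.add_const k).sup
    (convexOn_const (0 : ℝ) convex_univ)
  refine this.congr fun x _ => ?_
  simp [sub_eq_neg_add]

section PutPrice

variable {μ : Measure ℝ} [IsFiniteMeasure μ] {a b u w : ℝ}

theorem integrable_put (hμ : Integrable (fun x => x) μ) (k : ℝ) :
    Integrable (fun x => max (k - x) 0) μ :=
  ((integrable_const k).sub hμ).pos_part

theorem sub_integral_le_putPrice {ν : Measure ℝ} [IsProbabilityMeasure ν]
    (hν : Integrable (fun x => x) ν) (k : ℝ) : k - ∫ x, x ∂ν ≤ putPrice ν k := by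
  calc k - ∫ x, x ∂ν = ∫ x, (k - x) ∂ν := by
        rw [integral_sub (integrable_const k) hν, integral_const, probReal_univ, one_smul]
    _ ≤ putPrice ν k := integral_mono ((integrable_const k).sub hν) (integrable_put hν k)
        fun x => le_max_left _ _

theorem putPrice_sub_eq (hμ : Integrable (fun x => x) μ) (a b : ℝ) :
    putPrice μ b - putPrice μ a = ∫ x, (max (b - x) 0 - max (a - x) 0) ∂μ :=
  (integral_sub (integrable_put hμ b) (integrable_put hμ a)).symm

theorem mul_sub_le_putPrice_sub (hμ : Integrable (fun x => x) μ)
    (hu : u ≤ μ.real (Iic a)) (hab : a ≤ b) : u * (b - a) ≤ putPrice μ b - putPrice μ a := by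
  calc u * (b - a) ≤ μ.real (Iic a) • (b - a) := by
        rw [smul_eq_mul]; exact mul_le_mul_of_nonneg_right hu (sub_nonneg.2 hab)
    _ = ∫ x, (Iic a).indicator (fun _ => b - a) x ∂μ :=
        (integral_indicator_const _ measurableSet_Iic).symm
    _ ≤ putPrice μ b - putPrice μ a := by
        rw [putPrice_sub_eq hμ]
        refine integral_mono ((integrable_const _).indicator measurableSet_Iic)
          ((integrable_put hμ b).sub (integrable_put hμ a)) fun x => ?_
        by_cases hx : x ≤ a
        · simp [indicator_of_mem (mem_Iic.2 hx), max_eq_left (sub_nonneg.2 hx),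
            max_eq_left (sub_nonneg.2 (hx.trans hab))]
        · simp [indicator_of_notMem (notMem_Iic.2 (not_le.1 hx)),
            max_eq_right (sub_nonpos.2 (not_le.1 hx).le)]

theorem putPrice_sub_le_mul_sub (hμ : Integrable (fun x => x) μ)
    (hw : μ.real (Iio b) ≤ w) (hab : a ≤ b) : putPrice μ b - putPrice μ a ≤ w * (b - a) := by
  calc putPrice μ b - putPrice μ a ≤ ∫ x, (Iio b).indicator (fun _ => b - a) x ∂μ := by
        rw [putPrice_sub_eq hμ]
        refine integral_mono ((integrable_put hμ b).sub (integrable_put hμ a))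
          ((integrable_const _).indicator measurableSet_Iio) fun x => ?_
        by_cases hx : x < b
        · simp only [indicator_of_mem (mem_Iio.2 hx)]
          have : max (b - x) 0 ≤ max (a - x) 0 + (b - a) :=
            max_le (by linarith [le_max_left (a - x) 0]) (by linarith [le_max_right (a - x) 0])
          linarith
        · simp [indicator_of_notMem (notMem_Iio.2 (not_lt.1 hx)),
            max_eq_right (sub_nonpos.2 (not_lt.1 hx)),
            max_eq_right (sub_nonpos.2 (hab.trans (not_lt.1 hx)))]
    _ = μ.real (Iio b) • (b - a) := integral_indicator_const _ measurableSet_Iio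
    _ ≤ w * (b - a) := by rw [smul_eq_mul]; gcongr

end PutPrice

section QuantilePut

variable {μ ν : Measure ℝ} [IsFiniteMeasure μ] {G : ℝ → ℝ} {a g k u w : ℝ}

theorem quantilePut_eq (μ : Measure ℝ) (G : ℝ → ℝ) (u k : ℝ) :
    quantilePut μ G u k = putPrice μ (min k (G u)) + u * (k - min k (G u)) := by
  rw [quantilePut, max_sub_zero_eq_sub_min]

theorem quantilePut_le_putPrice (hμ : Integrable (fun x => x) μ)
    (hu : u ≤ μ.real (Iic (G u))) : quantilePut μ G u k ≤ putPrice μ k := by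
  rw [quantilePut_eq]
  rcases le_total k (G u) with hk | hk
  · simp [min_eq_left hk]
  · rw [min_eq_right hk]
    linarith [mul_sub_le_putPrice_sub hμ hu hk]

theorem quantilePut_le_quantilePut (hμ : Integrable (fun x => x) μ)
    (hu : u ≤ μ.real (Iic (G u))) (huw : u ≤ w) (hG : G u ≤ G w) :
    quantilePut μ G u k ≤ quantilePut μ G w k := by
  rw [quantilePut_eq, quantilePut_eq]
  rcases le_total k (G u) with hk | hk
  · simp [min_eq_left hk, min_eq_left (hk.trans hG)]
  · rw [min_eq_right hk]
    have hb : G u ≤ min k (G w) := le_min hk hG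
    have := mul_sub_le_putPrice_sub hμ hu hb
    nlinarith [min_le_left k (G w)]

theorem quantilePut_le_putPrice_min_add (hμ : Integrable (fun x => x) μ)
    (hw : μ.real (Iio (G w)) ≤ w) (hg : g ≤ G w) :
    quantilePut μ G w k ≤ putPrice μ (min k g) + w * max (k - g) 0 := by
  rw [quantilePut_eq, max_sub_zero_eq_sub_min]
  have hab : min k g ≤ min k (G w) := min_le_min_left k hg
  have := putPrice_sub_le_mul_sub hμ
    ((measureReal_mono (Iio_subset_Iio (min_le_right k (G w)))).trans hw) hab
  linarith

theorem quantileGap_nonneg (hμ : Integrable (fun x => x) μ)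
    (hμν : ∀ k, putPrice μ k ≤ putPrice ν k) (hw : w ≤ μ.real (Iic (G w))) :
    0 ≤ quantileGap μ ν G w k :=
  sub_nonneg.2 ((quantilePut_le_putPrice hμ hw).trans (hμν k))

theorem quantileGap_le_quantileGap (hμ : Integrable (fun x => x) μ)
    (hu : u ≤ μ.real (Iic (G u))) (huw : u ≤ w) (hG : G u ≤ G w) :
    quantileGap μ ν G w k ≤ quantileGap μ ν G u k :=
  sub_le_sub_left (quantilePut_le_quantilePut hμ hu huw hG) _

variable [IsProbabilityMeasure ν]

theorem mul_max_sub_le_quantileGap_add (hμ : Integrable (fun x => x) μ)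
    (hν : Integrable (fun x => x) ν) (hμν : ∀ k, putPrice μ k ≤ putPrice ν k)
    (hw₁ : μ.real (Iio (G w)) ≤ w) (hw₂ : w ≤ μ.real (Iic (G w))) (hg : g ≤ G w)
    (ha : a ≤ 1 - w) :
    a * max (k - g) 0 ≤ quantileGap μ ν G w k + |∫ x, x ∂ν + putPrice μ g - g| := by
  rcases le_total k g with hk | hk
  · rw [max_eq_right (sub_nonpos.2 hk), mul_zero]
    exact add_nonneg (quantileGap_nonneg hμ hμν hw₂) (abs_nonneg _)
  · have hQ := quantilePut_le_putPrice_min_add (k := k) hμ hw₁ hg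
    rw [min_eq_right hk, max_eq_left (sub_nonneg.2 hk)] at hQ
    rw [max_eq_left (sub_nonneg.2 hk), quantileGap]
    nlinarith [sub_integral_le_putPrice hν k, le_abs_self (∫ x, x ∂ν + putPrice μ g - g)]

theorem quantileGap_add_le_mul (hμ : Integrable (fun x => x) μ)
    (hν : Integrable (fun x => x) ν) (hμν : ∀ k, putPrice μ k ≤ putPrice ν k)
    (hw₁ : μ.real (Iio (G w)) ≤ w) (hw₂ : w ≤ μ.real (Iic (G w))) (hG : G u ≤ G w)
    (hg : g ≤ G u) (huw : u ≤ w) (ha : 0 < a) (ha₁ : a ≤ 1 - w) :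
    quantileGap μ ν G u k + |∫ x, x ∂ν + putPrice μ g - g|
      ≤ (1 + (w - u) / a) * (quantileGap μ ν G w k + |∫ x, x ∂ν + putPrice μ g - g|) := by
  have hQ := quantilePut_le_putPrice_min_add (k := k) hμ hw₁ hG
  have hgrowth := mul_max_sub_le_quantileGap_add (k := k) hμ hν hμν hw₁ hw₂ (hg.trans hG) ha₁
  have hmax : max (k - G u) 0 ≤ max (k - g) 0 := max_le_max (by linarith) le_rfl
  have hstep : (w - u) * max (k - g) 0 ≤ (w - u) / a * (quantileGap μ ν G w k
      + |∫ x, x ∂ν + putPrice μ g - g|) := by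
    rw [div_mul_eq_mul_div, le_div_iff₀ ha, mul_assoc, mul_comm (max _ _)]
    exact mul_le_mul_of_nonneg_left hgrowth (sub_nonneg.2 huw)
  simp only [quantileGap, quantilePut] at hQ hstep ⊢
  nlinarith [mul_le_mul_of_nonneg_left hmax (sub_nonneg.2 huw)]

theorem quantileGap_slowlyAntitoneOn (hμ : Integrable (fun x => x) μ)
    (hν : Integrable (fun x => x) ν) (hμν : ∀ k, putPrice μ k ≤ putPrice ν k) {u₀ u₁ : ℝ}
    (hG : MonotoneOn G (Icc u₀ u₁))
    (hGq : ∀ u ∈ Icc u₀ u₁, μ.real (Iio (G u)) ≤ u ∧ u ≤ μ.real (Iic (G u))) (hu₁ : u₁ < 1)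
    (k : ℝ) :
    SlowlyAntitoneOn (fun u => quantileGap μ ν G u k) (Icc u₀ u₁) (1 - u₁)
      |∫ x, x ∂ν + putPrice μ (G u₀) - G u₀| := by
  intro u hu w hw huw
  have hGuw := hG hu hw huw
  exact ⟨quantileGap_le_quantileGap hμ (hGq u hu).2 huw hGuw,
    quantileGap_add_le_mul hμ hν hμν (hGq w hw).1 (hGq w hw).2 hGuw
      (hG (left_mem_Icc.2 (hu.1.trans hu.2)) hu hu.1) huw (by linarith) (by linarith [hw.2])⟩

end QuantilePut

theorem stmt15_general
    (μ ν : Measure ℝ)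
    [IsProbabilityMeasure μ] [IsProbabilityMeasure ν]
    (hμint : Integrable (fun x => x) μ) (hνint : Integrable (fun x => x) ν)
    (hcx : ∀ f : ℝ → ℝ, ConvexOn ℝ Set.univ f → Integrable f μ → Integrable f ν →
      ∫ x, f x ∂μ ≤ ∫ x, f x ∂ν)
    (Pμ Pν : ℝ → ℝ)
    (hPμ : ∀ k, Pμ k = ∫ x, max (k - x) 0 ∂μ)
    (hPν : ∀ k, Pν k = ∫ x, max (k - x) 0 ∂ν)
    (G : ℝ → ℝ) (hGmono : MonotoneOn G (Set.Ioo 0 1))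
    (hGq : ∀ u ∈ Set.Ioo (0:ℝ) 1,
      (μ (Set.Iio (G u))).toReal ≤ u ∧ u ≤ (μ (Set.Iic (G u))).toReal)
    (E Ec : ℝ → ℝ → ℝ)
    (hE : ∀ u ∈ Set.Ioo (0:ℝ) 1, ∀ k, E u k = Pν k - Pμ (min k (G u)) - u * max (k - G u) 0)
    (hEcConv : ∀ u ∈ Set.Ioo (0:ℝ) 1, ConvexOn ℝ Set.univ (Ec u))
    (hEcLe : ∀ u ∈ Set.Ioo (0:ℝ) 1, ∀ k, Ec u k ≤ E u k)
    (hEcMax : ∀ u ∈ Set.Ioo (0:ℝ) 1, ∀ h : ℝ → ℝ, ConvexOn ℝ Set.univ h →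
      (∀ k, h k ≤ E u k) → ∀ k, h k ≤ Ec u k)
    :
    ∀ v ∈ Set.Ioo (0:ℝ) 1, ∀ k : ℝ,
      Tendsto (fun u => E u k) (nhdsWithin v (Set.Iio v)) (nhds (E v k)) ∧
      Tendsto (fun u => E u k) (nhdsWithin v (Set.Ioi v)) (nhds (E v k)) ∧
      Tendsto (fun u => Ec u k) (nhdsWithin v (Set.Iio v)) (nhds (Ec v k)) ∧
      Tendsto (fun u => Ec u k) (nhdsWithin v (Set.Ioi v)) (nhds (Ec v k)) := by
  rintro v ⟨hv₀, hv₁⟩ k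
  obtain rfl : Pμ = putPrice μ := funext hPμ
  obtain rfl : Pν = putPrice ν := funext hPν
  have hsub : Icc (v / 2) ((v + 1) / 2) ⊆ Ioo 0 1 := Icc_subset_Ioo (by linarith) (by linarith)
  have hv : v ∈ Ioo (v / 2) ((v + 1) / 2) := ⟨by linarith, by linarith⟩
  have ha : 0 ≤ 1 - (v + 1) / 2 := by linarith
  have hμν : ∀ j, putPrice μ j ≤ putPrice ν j := fun j =>
    hcx _ (convexOn_put j) (integrable_put hμint j) (integrable_put hνint j)
  have hE_slow : ∀ j, SlowlyAntitoneOn (fun u => E u j) (Icc (v / 2) ((v + 1) / 2)) _ _ :=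
    fun j => (quantileGap_slowlyAntitoneOn hμint hνint hμν (hGmono.mono hsub)
      (fun u hu => hGq u (hsub hu)) (by linarith) j).congr fun u hu => by
        dsimp only
        rw [hE u (hsub hu) j, quantileGap, quantilePut, sub_sub]
  have hEc_slow := IsLargestConvexMinorant.slowlyAntitoneOn
    (fun u hu => ⟨hEcConv u (hsub hu), hEcLe u (hsub hu), hEcMax u (hsub hu)⟩) ha hE_slow k
  have hE_cont := ((hE_slow k).continuousAt ha hv).tendsto
  have hEc_cont := (hEc_slow.continuousAt ha hv).tendsto
  exact ⟨hE_cont.mono_left nhdsWithin_le_nhds, hE_cont.mono_left nhdsWithin_le_nhds,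
    hEc_cont.mono_left nhdsWithin_le_nhds, hEc_cont.mono_left nhdsWithin_le_nhds⟩

theorem stmt15
    (μ ν : Measure ℝ)
    [IsProbabilityMeasure μ] [IsProbabilityMeasure ν]
    (hμint : Integrable (fun x => x) μ) (hνint : Integrable (fun x => x) ν)
    (hcx : ∀ f : ℝ → ℝ, ConvexOn ℝ Set.univ f → Integrable f μ → Integrable f ν →
      ∫ x, f x ∂μ ≤ ∫ x, f x ∂ν)
    (Pμ Pν D : ℝ → ℝ)
    (hPμ : ∀ k, Pμ k = ∫ x, max (k - x) 0 ∂μ)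
    (hPν : ∀ k, Pν k = ∫ x, max (k - x) 0 ∂ν)
    (hD : ∀ k, D k = Pν k - Pμ k)
    (hDconn : Set.OrdConnected {k : ℝ | 0 < D k})
    (G : ℝ → ℝ) (hGmono : MonotoneOn G (Set.Ioo 0 1))
    (hGq : ∀ u ∈ Set.Ioo (0:ℝ) 1,
      (μ (Set.Iio (G u))).toReal ≤ u ∧ u ≤ (μ (Set.Iic (G u))).toReal)
    (E Ec : ℝ → ℝ → ℝ)
    (hE : ∀ u ∈ Set.Ioo (0:ℝ) 1, ∀ k, E u k = Pν k - Pμ (min k (G u)) - u * max (k - G u) 0)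
    (hEcConv : ∀ u ∈ Set.Ioo (0:ℝ) 1, ConvexOn ℝ Set.univ (Ec u))
    (hEcLe : ∀ u ∈ Set.Ioo (0:ℝ) 1, ∀ k, Ec u k ≤ E u k)
    (hEcMax : ∀ u ∈ Set.Ioo (0:ℝ) 1, ∀ h : ℝ → ℝ, ConvexOn ℝ Set.univ h →
      (∀ k, h k ≤ E u k) → ∀ k, h k ≤ Ec u k)
    (hGleft : ∀ u ∈ Set.Ioo (0:ℝ) 1, G u = sInf {x : ℝ | u ≤ (μ (Set.Iic x)).toReal})
    :
    ∀ v ∈ Set.Ioo (0:ℝ) 1, ∀ k : ℝ,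
      Tendsto (fun u => E u k) (nhdsWithin v (Set.Iio v)) (nhds (E v k)) ∧
      Tendsto (fun u => E u k) (nhdsWithin v (Set.Ioi v)) (nhds (E v k)) ∧
      Tendsto (fun u => Ec u k) (nhdsWithin v (Set.Iio v)) (nhds (Ec v k)) ∧
      Tendsto (fun u => Ec u k) (nhdsWithin v (Set.Ioi v)) (nhds (Ec v k)) :=
  stmt15_general μ ν hμint hνint hcx Pμ Pν hPμ hPν G hGmono hGq E Ec hE hEcConv hEcLe hEcMax
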